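/- Tight relaxation of unconstrained fractional set programs: for non-negative set functions R̂, Ŝ with R̂(∅)=Ŝ(∅)=0 and Lovasz extensions R, S, the infimum over nonempty subsets C ⊆ V of R̂(C)/Ŝ(C) equals the infimum over f ∈ ℝ₊^n of R(f)/S(f). -/

import Mathlib

/-!
The indicator vector of a nonempty set `C` has Lovász extensions `R̂ C` and `Ŝ C`, so every
set ratio is also a relaxed ratio. Conversely, if `m` is the infimum of the set ratios then
`m Ŝ ≤ R̂` on all sets; the Lovász extension is linear in the set function and monotone in it on
nonnegative vectors, so `m S(f) ≤ R(f)` for every `f ≥ 0`.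
-/

open Finset

noncomputable def sortedVal {n : ℕ} (f : Fin n → ℝ) : Fin n → ℝ := f ∘ Tuple.sort f

noncomputable def thresholdSet {n : ℕ} (f : Fin n → ℝ) (i : Fin n) : Finset (Fin n) :=
  Finset.univ.filter (fun j => sortedVal f i ≤ f j)

noncomputable def lovasz {n : ℕ} (R : Finset (Fin n) → ℝ) (f : Fin n → ℝ) : ℝ :=
  (∑ i : Fin n, if h : (i : ℕ) + 1 < n then
      R (thresholdSet f ⟨(i : ℕ) + 1, h⟩) * (sortedVal f ⟨(i : ℕ) + 1, h⟩ - sortedVal f i)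
    else 0)
  + R Finset.univ * (if h : 0 < n then sortedVal f ⟨0, h⟩ else 0)

def Submodular {α : Type*} [DecidableEq α] (R : Finset α → ℝ) : Prop :=
  ∀ A B : Finset α, R (A ∪ B) + R (A ∩ B) ≤ R A + R B

lemma sortedVal_mono {n : ℕ} (f : Fin n → ℝ) : Monotone (sortedVal f) :=
  Tuple.monotone_sort f

lemma sortedVal_sort_symm_apply {n : ℕ} (f : Fin n → ℝ) (j : Fin n) :
    sortedVal f ((Tuple.sort f)⁻¹ j) = f j := by
  simp [sortedVal]

lemma Fin.sum_dite_succ_sub {m : ℕ} (v : Fin (m + 1) → ℝ) :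
    ∑ i : Fin (m + 1), (if h : (i : ℕ) + 1 < m + 1 then v ⟨i + 1, h⟩ - v i else 0)
      = v (Fin.last m) - v 0 := by
  rw [Fin.sum_univ_castSucc]
  have := Finset.sum_range_sub (fun k => if h : k < m + 1 then v ⟨k, h⟩ else 0) m
  rw [← Fin.sum_univ_eq_sum_range] at this
  simpa [Fin.last, Fin.castSucc, Fin.castAdd, Fin.castLE] using this

lemma lovasz_zero {n : ℕ} (f : Fin n → ℝ) : lovasz (fun _ => 0) f = 0 := by
  simp [lovasz]

lemma lovasz_const_mul {n : ℕ} (c : ℝ) (R : Finset (Fin n) → ℝ) (f : Fin n → ℝ) :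
    lovasz (fun A => c * R A) f = c * lovasz R f := by
  simp only [lovasz, mul_add, mul_sum]
  congr 1
  · refine sum_congr rfl fun i _ => ?_
    split_ifs <;> ring
  · ring

lemma lovasz_mono {n : ℕ} {R R' : Finset (Fin n) → ℝ} (hRR' : ∀ A, R A ≤ R' A)
    {f : Fin n → ℝ} (hf : ∀ i, 0 ≤ f i) : lovasz R f ≤ lovasz R' f := by
  refine add_le_add (sum_le_sum fun i _ => ?_) ?_
  · split_ifs with h
    · exact mul_le_mul_of_nonneg_right (hRR' _)
        (sub_nonneg.2 (sortedVal_mono f (Fin.le_def.2 (Nat.le_succ _))))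
    · rfl
  · split_ifs
    · exact mul_le_mul_of_nonneg_right (hRR' _) (hf _)
    · simp

lemma lovasz_nonneg {n : ℕ} {R : Finset (Fin n) → ℝ} (hR : ∀ A, 0 ≤ R A)
    {f : Fin n → ℝ} (hf : ∀ i, 0 ≤ f i) : 0 ≤ lovasz R f :=
  lovasz_zero f ▸ lovasz_mono hR hf

lemma lovasz_indicator {n : ℕ} (R : Finset (Fin n) → ℝ) {C : Finset (Fin n)}
    (hC : C.Nonempty) : lovasz R (fun j => if j ∈ C then 1 else 0) = R C := by
  obtain ⟨j₀, hj₀⟩ := hC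
  obtain ⟨m, rfl⟩ : ∃ m, n = m + 1 := Nat.exists_eq_add_one_of_ne_zero j₀.pos.ne'
  set f : Fin (m + 1) → ℝ := fun j => if j ∈ C then 1 else 0
  have hf01 : ∀ i, sortedVal f i = 0 ∨ sortedVal f i = 1 := fun i => by
    simp only [sortedVal, Function.comp_apply, f]
    split_ifs <;> simp
  have hthreshold : ∀ k, sortedVal f k = 1 → thresholdSet f k = C := fun k hk => by
    ext j
    simp only [thresholdSet, hk, mem_filter, mem_univ, true_and, f]
    split_ifs <;> norm_num [*]
  have hlast : sortedVal f (Fin.last m) = 1 := by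
    have := sortedVal_mono f (Fin.le_last ((Tuple.sort f)⁻¹ j₀))
    rw [sortedVal_sort_symm_apply] at this
    rcases hf01 (Fin.last m) with h | h
    · norm_num [f, hj₀, h] at this
    · exact h
  -- A nonzero step of the sorted values is a jump from 0 to 1, where the threshold set is `C`.
  have hterm : ∀ i : Fin (m + 1),
      (if h : (i : ℕ) + 1 < m + 1 then
        R (thresholdSet f ⟨i + 1, h⟩) * (sortedVal f ⟨i + 1, h⟩ - sortedVal f i) else 0)
      = R C * (if h : (i : ℕ) + 1 < m + 1 then
        sortedVal f ⟨i + 1, h⟩ - sortedVal f i else 0) := fun i => by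
    split_ifs with h
    · rcases hf01 ⟨i + 1, h⟩ with hsucc | hsucc
      · have hle := sortedVal_mono f (Fin.le_def.2 (Nat.le_succ i) : i ≤ ⟨i + 1, h⟩)
        rcases hf01 i with hi | hi
        · simp [hsucc, hi]
        · norm_num [hsucc, hi] at hle
      · rw [hthreshold _ hsucc]
    · simp
  rw [lovasz, sum_congr rfl fun i _ => hterm i, ← mul_sum, Fin.sum_dite_succ_sub, hlast,
    dif_pos m.succ_pos, Fin.zero_eta]
  by_cases hCu : C = univ
  · have h0 : sortedVal f 0 = 1 := by simp [sortedVal, f, hCu]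
    rw [h0, hCu]
    ring
  · obtain ⟨j₁, hj₁⟩ := not_forall.1 (mt eq_univ_iff_forall.2 hCu)
    have hle := sortedVal_mono f (Fin.zero_le ((Tuple.sort f)⁻¹ j₁))
    rw [sortedVal_sort_symm_apply] at hle
    have h0 : sortedVal f 0 = 0 := by
      rcases hf01 0 with h | h
      · exact h
      · norm_num [f, hj₁, h] at hle
    rw [h0]
    ring

/-- Ratios with zero denominator, being +∞, are excluded on both sides. -/
theorem tight_relaxation_general {n : ℕ} (R S : Finset (Fin n) → ℝ)
    (hS0 : S ∅ = 0)
    (hRpos : ∀ A : Finset (Fin n), 0 ≤ R A) (hSpos : ∀ A : Finset (Fin n), 0 ≤ S A) :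
    sInf {q : ℝ | ∃ C : Finset (Fin n), C.Nonempty ∧ 0 < S C ∧ q = R C / S C}
      = sInf {q : ℝ | ∃ f : Fin n → ℝ, (∀ i, 0 ≤ f i) ∧ 0 < lovasz S f ∧
          q = lovasz R f / lovasz S f} := by
  set L := {q : ℝ | ∃ C : Finset (Fin n), C.Nonempty ∧ 0 < S C ∧ q = R C / S C}
  set T := {q : ℝ | ∃ f : Fin n → ℝ, (∀ i, 0 ≤ f i) ∧ 0 < lovasz S f ∧
      q = lovasz R f / lovasz S f}
  have hLT : L ⊆ T := by
    rintro q ⟨C, hC, hSC, rfl⟩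
    refine ⟨fun j => if j ∈ C then 1 else 0, fun j => by positivity, ?_, ?_⟩
    · rwa [lovasz_indicator S hC]
    · rw [lovasz_indicator R hC, lovasz_indicator S hC]
  have hbddT : BddBelow T := ⟨0, by
    rintro q ⟨f, hf, hSf, rfl⟩
    exact div_nonneg (lovasz_nonneg hRpos hf) hSf.le⟩
  rcases L.eq_empty_or_nonempty with hLe | hLne
  · have hS : S = fun _ => 0 := funext fun A => by
      rcases A.eq_empty_or_nonempty with rfl | hA
      · exact hS0
      · exact ((hSpos A).eq_or_lt.resolve_right fun hSA => hLe.subset ⟨A, hA, hSA, rfl⟩).symm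
    have hTe : T = ∅ := Set.eq_empty_of_forall_notMem fun q ⟨f, _, hSf, _⟩ => by
      simp [hS, lovasz_zero] at hSf
    rw [hLe, hTe]
  · have hbound : ∀ A, sInf L * S A ≤ R A := fun A => by
      rcases (hSpos A).eq_or_lt with hSA | hSA
      · rw [← hSA, mul_zero]
        exact hRpos A
      · have hA : A.Nonempty := nonempty_iff_ne_empty.2 (by rintro rfl; simp [hS0] at hSA)
        exact (le_div_iff₀ hSA).1 (csInf_le (hbddT.mono hLT) ⟨A, hA, hSA, rfl⟩)
    refine le_antisymm (le_csInf (hLne.mono hLT) ?_) (csInf_le_csInf hbddT hLne hLT)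
    rintro q ⟨f, hf, hSf, rfl⟩
    rw [le_div_iff₀ hSf, ← lovasz_const_mul]
    exact lovasz_mono hbound hf

/-- tight relaxation of unconstrained fractional set programs
(ratios with zero denominator, being +∞, are excluded on both sides). -/
theorem tight_relaxation {n : ℕ} (R S : Finset (Fin n) → ℝ)
    (hR0 : R ∅ = 0) (hS0 : S ∅ = 0)
    (hRpos : ∀ A : Finset (Fin n), 0 ≤ R A) (hSpos : ∀ A : Finset (Fin n), 0 ≤ S A) :
    sInf {q : ℝ | ∃ C : Finset (Fin n), C.Nonempty ∧ 0 < S C ∧ q = R C / S C}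
      = sInf {q : ℝ | ∃ f : Fin n → ℝ, (∀ i, 0 ≤ f i) ∧ 0 < lovasz S f ∧
          q = lovasz R f / lovasz S f} :=
  tight_relaxation_general R S hS0 hRpos hSpos
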